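/- arXiv:2512.24788 — 3 statements merged into one kernel-verified Lean document; each statement's English description precedes it below -/
import Mathlib

section
/- (Minimum achievable MSE, Eq. (11).) Under the setting of Proposition 1 (independent standard Bernoulli(1/2) variables X_1,…,X_K, independent Gaussian noise N with mean 0 and variance σ²/2 > 0, nonempty S with |S| = m, p > 0, r = ∑_{k=1}^K X_k, y = 2√p ∑_{k∈S} X_k − √p·m + N), the minimum mean squared error attained by the LMMSE detector r̂ = λ*y + μ* with λ* = √p·m/(2p·m + σ²) and μ* = K/2 equals E[(r − r̂)²] = (2p·m·(K − m) + K·σ²)/(8p·m + 4σ²). -/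
/-!
The estimation error `r - r̂` is an affine combination `∑ₖ cₖ Xₖ - λ* N + d` of independent
variables, with `cₖ = 1 - 2λ*√p` on `S` and `cₖ = 1` off `S`. The choice `μ* = K/2` makes its
mean vanish, so the MSE is its variance `∑ₖ cₖ² / 4 + λ*² σ² / 2`, which simplifies to the
claimed value.
-/

open MeasureTheory ProbabilityTheory
open scoped NNReal

section FairBit

variable {Ω : Type*} [MeasurableSpace Ω] {μ : Measure Ω} [IsProbabilityMeasure μ] {X : Ω → ℝ}

lemma ae_eq_zero_or_eq_one_of_measure_preimage (hX : Measurable X)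
    (h1 : μ (X ⁻¹' {1}) = 1 / 2) (h0 : μ (X ⁻¹' {0}) = 1 / 2) :
    ∀ᵐ ω ∂μ, X ω = 0 ∨ X ω = 1 := by
  have hdisj : Disjoint (X ⁻¹' {0}) (X ⁻¹' {1}) :=
    (Set.disjoint_singleton.2 zero_ne_one).preimage X
  have hfull : μ (X ⁻¹' {0, 1}) = 1 := by
    rw [Set.insert_eq, Set.preimage_union, measure_union hdisj (hX (measurableSet_singleton 1)),
      h0, h1, ENNReal.add_halves]
  exact ae_iff.2 ((prob_compl_eq_zero_iff (hX (by measurability))).2 hfull)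

lemma integral_eq_half_of_measure_preimage (hX : Measurable X)
    (h1 : μ (X ⁻¹' {1}) = 1 / 2) (h0 : μ (X ⁻¹' {0}) = 1 / 2) : μ[X] = 1 / 2 := by
  have hind : X =ᵐ[μ] (X ⁻¹' {1}).indicator 1 := by
    filter_upwards [ae_eq_zero_or_eq_one_of_measure_preimage hX h1 h0] with ω hω
    rcases hω with hω | hω <;> simp [Set.indicator, hω]
  rw [integral_congr_ae hind, integral_indicator_one (hX (measurableSet_singleton 1)),
    measureReal_def, h1]
  simp

lemma variance_eq_quarter_of_measure_preimage (hX : Measurable X)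
    (h1 : μ (X ⁻¹' {1}) = 1 / 2) (h0 : μ (X ⁻¹' {0}) = 1 / 2) : Var[X; μ] = 1 / 4 := by
  have hsq : (fun ω => (X ω - μ[X]) ^ 2) =ᵐ[μ] fun _ => 1 / 4 := by
    filter_upwards [ae_eq_zero_or_eq_one_of_measure_preimage hX h1 h0] with ω hω
    rw [integral_eq_half_of_measure_preimage hX h1 h0]
    rcases hω with hω | hω <;> rw [hω] <;> norm_num
  rw [variance_eq_integral hX.aemeasurable, integral_congr_ae hsq]
  simp

lemma memLp_of_ae_eq_zero_or_eq_one (hX : Measurable X) (p : ENNReal)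
    (h : ∀ᵐ ω ∂μ, X ω = 0 ∨ X ω = 1) : MemLp X p μ := by
  refine MemLp.of_bound hX.aestronglyMeasurable 1 ?_
  filter_upwards [h] with ω hω
  rcases hω with hω | hω <;> simp [hω]

end FairBit

lemma Fintype.sum_ite_mem_const {ι R : Type*} [Fintype ι] [DecidableEq ι] [AddCommGroup R]
    (S : Finset ι) (a b : R) :
    ∑ k, (if k ∈ S then a else b) = S.card • (a - b) + Fintype.card ι • b := by
  have hsplit : ∀ k, (if k ∈ S then a else b) = (if k ∈ S then a - b else 0) + b := fun k => by
    split_ifs <;> simp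
  simp_rw [hsplit, Finset.sum_add_distrib, Fintype.sum_ite_mem, Finset.sum_const,
    Finset.card_univ]

lemma ProbabilityTheory.HasLaw.memLp_of_gaussianReal {Ω : Type*} [MeasurableSpace Ω]
    {μ : Measure Ω} {N : Ω → ℝ} {m : ℝ} {v : ℝ≥0} (hN : HasLaw N (gaussianReal m v) μ)
    (p : ENNReal) (hp : p ≠ ⊤) : MemLp N p μ := by
  have h := memLp_id_gaussianReal' (μ := m) (v := v) p hp
  rw [← hN.map_eq] at h
  exact (memLp_map_measure_iff aestronglyMeasurable_id hN.aemeasurable).1 h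

section LinearCombination

variable {Ω ι : Type*} [MeasurableSpace Ω] {μ : Measure Ω} [Fintype ι] {X : ι → Ω → ℝ} {N : Ω → ℝ}

lemma integral_sq_eq_variance_add_sq [IsProbabilityMeasure μ] {Y : Ω → ℝ} (hY : MemLp Y 2 μ) :
    ∫ ω, Y ω ^ 2 ∂μ = Var[Y; μ] + μ[Y] ^ 2 := by
  rw [variance_eq_sub hY, sub_add_cancel]
  rfl

lemma variance_sum_mul_add_mul (hX : ∀ k, MemLp (X k) 2 μ) (hN : MemLp N 2 μ)
    (hindep : iIndepFun X μ) (hNindep : IndepFun (fun ω k => X k ω) N μ) (c : ι → ℝ) (b : ℝ) :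
    Var[fun ω => ∑ k, c k * X k ω + b * N ω; μ]
      = ∑ k, c k ^ 2 * Var[X k; μ] + b ^ 2 * Var[N; μ] := by
  have hsumN : IndepFun (fun ω => ∑ k, c k * X k ω) (fun ω => b * N ω) μ :=
    hNindep.comp (φ := fun x : ι → ℝ => ∑ k, c k * x k) (ψ := fun y => b * y)
      (by fun_prop) (by fun_prop)
  have hpair : Set.Pairwise (Finset.univ : Finset ι)
      fun i j => IndepFun (fun ω => c i * X i ω) (fun ω => c j * X j ω) μ :=
    fun i _ j _ hij => (hindep.indepFun hij).comp (measurable_const_mul _) (measurable_const_mul _)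
  have hsum : (fun ω => ∑ k, c k * X k ω) = ∑ k, fun ω => c k * X k ω := by
    ext ω
    simp only [Finset.sum_apply]
  rw [hsumN.variance_fun_add (memLp_finsetSum _ fun k _ => (hX k).const_mul _)
    (hN.const_mul b), variance_const_mul, hsum,
    IndepFun.variance_sum (fun k _ => (hX k).const_mul _) hpair]
  simp_rw [variance_const_mul]

lemma integral_sum_mul_add_mul_add [IsProbabilityMeasure μ] (hX : ∀ k, Integrable (X k) μ)
    (hN : Integrable N μ) (c : ι → ℝ) (b d : ℝ) :
    ∫ ω, (∑ k, c k * X k ω + b * N ω + d) ∂μ = ∑ k, c k * μ[X k] + b * μ[N] + d := by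
  have hsum : Integrable (fun ω => ∑ k, c k * X k ω) μ :=
    integrable_finsetSum _ fun k _ => (hX k).const_mul _
  have hsumN : Integrable (fun ω => ∑ k, c k * X k ω + b * N ω) μ := hsum.add (hN.const_mul b)
  rw [integral_add hsumN (integrable_const d),
    integral_add hsum (hN.const_mul b), integral_finsetSum _ fun k _ => (hX k).const_mul _]
  simp only [integral_const_mul, integral_const, probReal_univ, one_smul]

lemma integral_sq_sum_mul_add_mul_add [IsProbabilityMeasure μ] (hX : ∀ k, MemLp (X k) 2 μ)
    (hN : MemLp N 2 μ) (hindep : iIndepFun X μ) (hNindep : IndepFun (fun ω k => X k ω) N μ)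
    (c : ι → ℝ) (b d : ℝ) :
    ∫ ω, (∑ k, c k * X k ω + b * N ω + d) ^ 2 ∂μ
      = ∑ k, c k ^ 2 * Var[X k; μ] + b ^ 2 * Var[N; μ]
        + (∑ k, c k * μ[X k] + b * μ[N] + d) ^ 2 := by
  have hlin : MemLp (fun ω => ∑ k, c k * X k ω + b * N ω) 2 μ :=
    (memLp_finsetSum _ fun k _ => (hX k).const_mul _).add (hN.const_mul b)
  have haff : MemLp (fun ω => ∑ k, c k * X k ω + b * N ω + d) 2 μ := hlin.add (memLp_const d)
  rw [integral_sq_eq_variance_add_sq haff, variance_add_const hlin.aestronglyMeasurable d,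
    variance_sum_mul_add_mul hX hN hindep hNindep,
    integral_sum_mul_add_mul_add (fun k => (hX k).integrable one_le_two)
      (hN.integrable one_le_two)]

end LinearCombination

theorem lmmse_minimum_mse_general {Ω : Type*} [MeasurableSpace Ω]
    (μ : Measure Ω) [IsProbabilityMeasure μ]
    (K : ℕ) (X : Fin K → Ω → ℝ) (N : Ω → ℝ)
    (hXmeas : ∀ k, Measurable (X k)) (hNmeas : Measurable N)
    (hindep : iIndepFun X μ)
    (hBern : ∀ k, μ (X k ⁻¹' {1}) = 1 / 2 ∧ μ (X k ⁻¹' {0}) = 1 / 2)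
    (σ2 : ℝ≥0) (hσ : 0 < σ2)
    (hN : μ.map N = gaussianReal 0 (σ2 / 2))
    (hNindep : IndepFun (fun ω k => X k ω) N μ)
    (S : Finset (Fin K)) (m : ℕ) (hm : S.card = m)
    (p : ℝ) (hp : 0 < p) :
    ∫ ω, ((∑ k, X k ω) -
        ((Real.sqrt p * m / (2 * p * m + (σ2 : ℝ))) *
            (2 * Real.sqrt p * (∑ k ∈ S, X k ω) - Real.sqrt p * m + N ω)
          + (K : ℝ) / 2)) ^ 2 ∂μ
      = (2 * p * m * ((K : ℝ) - m) + K * (σ2 : ℝ)) / (8 * p * m + 4 * (σ2 : ℝ)) := by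
  set l := Real.sqrt p * m / (2 * p * m + (σ2 : ℝ))
  have hNlaw : HasLaw N (gaussianReal 0 (σ2 / 2)) μ := ⟨hNmeas.aemeasurable, hN⟩
  have herr : ∀ ω, (∑ k, X k ω) - (l * (2 * Real.sqrt p * (∑ k ∈ S, X k ω) - Real.sqrt p * m
      + N ω) + (K : ℝ) / 2) = ∑ k, (if k ∈ S then 1 - 2 * l * Real.sqrt p else 1) * X k ω
        + (-l) * N ω + (l * Real.sqrt p * m - K / 2) := fun ω => by
    have hc : ∀ k, (if k ∈ S then 1 - 2 * l * Real.sqrt p else 1) * X k ω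
        = X k ω - if k ∈ S then 2 * l * Real.sqrt p * X k ω else 0 := fun k => by
      split_ifs <;> ring
    simp only [hc, Finset.sum_sub_distrib, Fintype.sum_ite_mem, ← Finset.mul_sum]
    ring
  simp_rw [herr]
  rw [integral_sq_sum_mul_add_mul_add
      (fun k => memLp_of_ae_eq_zero_or_eq_one (hXmeas k) 2
        (ae_eq_zero_or_eq_one_of_measure_preimage (hXmeas k) (hBern k).1 (hBern k).2))
      (hNlaw.memLp_of_gaussianReal 2 ENNReal.ofNat_ne_top) hindep hNindep]
  simp only [variance_eq_quarter_of_measure_preimage (hXmeas _) (hBern _).1 (hBern _).2,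
    integral_eq_half_of_measure_preimage (hXmeas _) (hBern _).1 (hBern _).2,
    hNlaw.variance_eq, variance_id_gaussianReal, hNlaw.integral_eq, integral_id_gaussianReal,
    ite_pow, ite_mul, Fintype.sum_ite_mem_const, hm, Fintype.card_fin, nsmul_eq_mul]
  have hσR : (0 : ℝ) < σ2 := hσ
  obtain ⟨s, hs, rfl⟩ : ∃ s, 0 < s ∧ p = s ^ 2 :=
    ⟨√p, Real.sqrt_pos.2 hp, (Real.sq_sqrt hp.le).symm⟩
  simp only [l, Real.sqrt_sq hs.le, NNReal.coe_div, NNReal.coe_ofNat]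
  field_simp
  ring

/-- minimum achievable MSE, Eq. (11): in the setting of
Proposition 1, the LMMSE detector `r̂ = λ* y + μ*` with
`λ* = √p·m/(2p·m + σ²)` and `μ* = K/2` attains the mean squared error
`(2p·m·(K − m) + K·σ²)/(8p·m + 4σ²)`. -/
theorem lmmse_minimum_mse {Ω : Type*} [MeasurableSpace Ω]
    (μ : Measure Ω) [IsProbabilityMeasure μ]
    (K : ℕ) (hK : 1 ≤ K) (X : Fin K → Ω → ℝ) (N : Ω → ℝ)
    (hXmeas : ∀ k, Measurable (X k)) (hNmeas : Measurable N)
    (hindep : iIndepFun X μ)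
    (hBern : ∀ k, μ (X k ⁻¹' {1}) = 1 / 2 ∧ μ (X k ⁻¹' {0}) = 1 / 2)
    (σ2 : ℝ≥0) (hσ : 0 < σ2)
    (hN : μ.map N = gaussianReal 0 (σ2 / 2))
    (hNindep : IndepFun (fun ω k => X k ω) N μ)
    (S : Finset (Fin K)) (hS : S.Nonempty) (m : ℕ) (hm : S.card = m)
    (p : ℝ) (hp : 0 < p) :
    ∫ ω, ((∑ k, X k ω) -
        ((Real.sqrt p * m / (2 * p * m + (σ2 : ℝ))) *
            (2 * Real.sqrt p * (∑ k ∈ S, X k ω) - Real.sqrt p * m + N ω)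
          + (K : ℝ) / 2)) ^ 2 ∂μ
      = (2 * p * m * ((K : ℝ) - m) + K * (σ2 : ℝ)) / (8 * p * m + 4 * (σ2 : ℝ)) :=
  lmmse_minimum_mse_general μ K X N hXmeas hNmeas hindep hBern σ2 hσ hN hNindep S m hm p hp
end

section
/- (Monotonicity of the minimum MSE in the scaling power.) Fix natural numbers K ≥ m ≥ 1 and a real σ² > 0, and define f(p) = (2p·m·(K − m) + K·σ²)/(8p·m + 4σ²) for p ≥ 0. Then f is strictly decreasing on [0, ∞); i.e., for all 0 ≤ p₁ < p₂, f(p₂) < f(p₁). Consequently, for a fixed activated device set S of size m under the per-device constraints p ≤ |h_k|²P_k for all k ∈ S, the minimum MSE is achieved by the largest feasible scaling factor p* = min_{k∈S} |h_k|²P_k. -/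
/-- monotonicity of the minimum MSE in the scaling power:
`f(p) = (2p·m·(K − m) + K·σ²)/(8p·m + 4σ²)` is strictly decreasing on
`[0, ∞)`; consequently, for a fixed activated device set `S` of size `m`,
under the per-device feasibility constraints `p ≤ g k = |h_k|² P_k` for all
`k ∈ S`, the minimum MSE is achieved by the largest feasible scaling factor
`p* = min_{k∈S} g k`. -/
theorem mse_strictAnti_and_optimal_scaling (K m : ℕ) (hm : 1 ≤ m) (hmK : m ≤ K)
    (σ2 : ℝ) (hσ : 0 < σ2) :
    StrictAntiOn
      (fun p : ℝ => (2 * p * m * ((K : ℝ) - m) + K * σ2) / (8 * p * m + 4 * σ2))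
      (Set.Ici 0) ∧
    ∀ {ι : Type} (S : Finset ι) (hS : S.Nonempty) (g : ι → ℝ),
      (∀ k ∈ S, 0 ≤ g k) →
      ∀ p : ℝ, 0 ≤ p → (∀ k ∈ S, p ≤ g k) →
        (2 * (S.inf' hS g) * m * ((K : ℝ) - m) + K * σ2) /
            (8 * (S.inf' hS g) * m + 4 * σ2)
          ≤ (2 * p * m * ((K : ℝ) - m) + K * σ2) / (8 * p * m + 4 * σ2) := by
  have hm' : (1 : ℝ) ≤ (m : ℝ) := by exact_mod_cast hm
  have hmK' : (m : ℝ) ≤ (K : ℝ) := by exact_mod_cast hmK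
  have hanti : StrictAntiOn
      (fun p : ℝ => (2 * p * m * ((K : ℝ) - m) + K * σ2) / (8 * p * m + 4 * σ2))
      (Set.Ici 0) := by
    intro p1 hp1 p2 hp2 h12
    simp only [Set.mem_Ici] at hp1 hp2
    have hd1 : (0:ℝ) < 8 * p1 * m + 4 * σ2 := by nlinarith
    have hd2 : (0:ℝ) < 8 * p2 * m + 4 * σ2 := by nlinarith
    rw [div_lt_div_iff₀ hd2 hd1]
    have key : (0:ℝ) < σ2 * (p2 - p1) * ((m:ℝ) * m) :=
      mul_pos (mul_pos hσ (sub_pos.mpr h12))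
        (mul_pos (lt_of_lt_of_le zero_lt_one hm') (lt_of_lt_of_le zero_lt_one hm'))
    nlinarith [key]
  refine ⟨hanti, ?_⟩
  intro ι S hS g hg p hp hpg
  have hpinf : p ≤ S.inf' hS g := Finset.le_inf' hS g hpg
  have hinfmem : S.inf' hS g ∈ Set.Ici (0:ℝ) := le_trans hp hpinf
  exact hanti.antitoneOn (Set.mem_Ici.mpr hp) hinfmem hpinf
end

section
/- (Theorem 2: optimality of the greedy prefix selection.) Let K ≥ 1, σ² > 0, and let g : {1,…,K} → ℝ be positive values sorted in descending order, g_1 ≥ g_2 ≥ … ≥ g_K > 0. For a nonempty subset S ⊆ {1,…,K}, define p(S) = min_{k∈S} g_k and F(S) = (2·p(S)·|S|·(K − |S|) + K·σ²)/(8·p(S)·|S| + 4σ²). Then the minimum of F over all nonempty subsets of {1,…,K} is attained at a prefix set: there exists n ∈ {1,…,K} such that F({1,…,n}) ≤ F(S) for every nonempty S ⊆ {1,…,K}. Equivalently, min_{1≤n≤K} F({1,…,n}) = min_{∅≠S⊆{1,…,K}} F(S), so the greedy algorithm that evaluates only the K prefix sets of the descending channel-gain order returns a globally optimal truncation set. 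-/
/-- The feasible scaling factor for an activated set `S`: the minimum of the
effective power budgets `g k = |h_k|² P_k` over `S` (as an infimum of the image
set, which equals the minimum for a nonempty finite set). -/
noncomputable def scalingFactor {K : ℕ} (g : Fin K → ℝ) (S : Finset (Fin K)) : ℝ :=
  sInf (g '' ↑S)

/-- The minimum achievable MSE (after LMMSE detection) when the set `S` of
devices is activated: `e(S) = (2 p(S) |S| (K − |S|) + K σ²)/(8 p(S) |S| + 4σ²)`
with `p(S) = min_{k∈S} g k`. -/
noncomputable def mseOfSet (K : ℕ) (σ2 : ℝ) (g : Fin K → ℝ) (S : Finset (Fin K)) : ℝ :=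
  (2 * scalingFactor g S * S.card * ((K : ℝ) - S.card) + K * σ2) /
    (8 * scalingFactor g S * S.card + 4 * σ2)

lemma scaling_eq {K : ℕ} (g : Fin K → ℝ) {S : Finset (Fin K)} (hS : S.Nonempty) :
    scalingFactor g S = S.inf' hS g := by
  rw [scalingFactor, Finset.inf'_eq_csInf_image]

lemma prefix_card {K n : ℕ} (h : n ≤ K) :
    (Finset.univ.filter (fun i : Fin K => (i : ℕ) < n)).card = n := by
  have himg : (Finset.univ.filter (fun i : Fin K => (i : ℕ) < n)).image Fin.val
      = Finset.range n := by
    ext x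
    simp only [Finset.mem_image, Finset.mem_filter, Finset.mem_univ, true_and,
      Finset.mem_range]
    constructor
    · rintro ⟨i, hi, rfl⟩; exact hi
    · intro hx; exact ⟨⟨x, lt_of_lt_of_le hx h⟩, hx, rfl⟩
  calc (Finset.univ.filter (fun i : Fin K => (i : ℕ) < n)).card
      = ((Finset.univ.filter (fun i : Fin K => (i : ℕ) < n)).image Fin.val).card := by
        rw [Finset.card_image_of_injective _ Fin.val_injective]
    _ = n := by rw [himg, Finset.card_range]

lemma mse_mono (K σ2 : ℝ) (hσ : 0 < σ2) (m : ℝ) (hm : 1 ≤ m) (p q : ℝ)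
    (hp : 0 < p) (hpq : p ≤ q) :
    (2*q*m*(K-m)+K*σ2)/(8*q*m+4*σ2) ≤ (2*p*m*(K-m)+K*σ2)/(8*p*m+4*σ2) := by
  have hq : 0 < q := lt_of_lt_of_le hp hpq
  have hm0 : (0:ℝ) < m := lt_of_lt_of_le one_pos hm
  rw [div_le_div_iff₀ (by positivity) (by positivity)]
  nlinarith [mul_nonneg (mul_nonneg (sub_nonneg.2 hpq) hσ.le) (mul_pos hm0 hm0).le]

/-- Theorem 2, optimality of the greedy prefix selection: when
the positive values `g 0 ≥ g 1 ≥ … ≥ g (K-1)` are sorted in descending order,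
the minimum of the per-subcarrier MSE `e(S)` over all nonempty activation sets
`S ⊆ {0, …, K-1}` is attained at a prefix set `{0, …, n-1}`; hence the greedy
algorithm that evaluates only the `K` prefix sets returns a globally optimal
truncation set. -/
theorem greedy_prefix_optimal (K : ℕ) (hK : 1 ≤ K) (σ2 : ℝ) (hσ : 0 < σ2)
    (g : Fin K → ℝ) (hg : ∀ k, 0 < g k) (hsort : Antitone g) :
    ∃ n : ℕ, 1 ≤ n ∧ n ≤ K ∧
      ∀ S : Finset (Fin K), S.Nonempty →
        mseOfSet K σ2 g (Finset.univ.filter (fun i : Fin K => (i : ℕ) < n))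
          ≤ mseOfSet K σ2 g S := by
  classical
  set pref : ℕ → Finset (Fin K) := fun n => Finset.univ.filter (fun i : Fin K => (i : ℕ) < n)
  -- each prefix of size 1..K is nonempty
  have hprefne : ∀ n, 1 ≤ n → n ≤ K → (pref n).Nonempty := by
    intro n h1 h2
    rw [← Finset.card_pos, prefix_card h2]; omega
  -- key: prefix of size m beats any set of size m
  have hkey : ∀ S : Finset (Fin K), S.Nonempty →
      mseOfSet K σ2 g (pref S.card) ≤ mseOfSet K σ2 g S := by
    intro S hS
    set m := S.card with hm
    have hm1 : 1 ≤ m := Finset.card_pos.2 hS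
    have hmK : m ≤ K := by simpa using Finset.card_le_univ S
    have hPne : (pref m).Nonempty := hprefne m hm1 hmK
    have hcard : (pref m).card = m := prefix_card hmK
    -- exists j ∈ S with m - 1 ≤ j.val
    have hj : ∃ j ∈ S, m - 1 ≤ (j : ℕ) := by
      by_contra hcon
      push_neg at hcon
      have hsub : S ⊆ pref (m - 1) := by
        intro j hjS
        simp only [pref, Finset.mem_filter, Finset.mem_univ, true_and]
        exact hcon j hjS
      have := Finset.card_le_card hsub
      rw [prefix_card (by omega : m - 1 ≤ K)] at this
      omega
    obtain ⟨j, hjS, hjval⟩ := hj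
    have hlt : m - 1 < K := by omega
    -- scaling of prefix equals g ⟨m-1⟩
    have hscal_pref : scalingFactor g (pref m) = g ⟨m - 1, hlt⟩ := by
      rw [scaling_eq g hPne]
      apply le_antisymm
      · apply Finset.inf'_le
        simp only [pref, Finset.mem_filter, Finset.mem_univ, true_and]
        omega
      · apply Finset.le_inf'
        intro i hi
        simp only [pref, Finset.mem_filter, Finset.mem_univ, true_and] at hi
        exact hsort (by simp [Fin.le_def]; omega)
    have hscal_S : scalingFactor g S ≤ g ⟨m - 1, hlt⟩ := by
      rw [scaling_eq g hS]
      exact le_trans (Finset.inf'_le g hjS) (hsort (by simp [Fin.le_def]; omega))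
    have hSpos : 0 < scalingFactor g S := by
      rw [scaling_eq g hS]
      obtain ⟨i, hi, hieq⟩ := Finset.exists_mem_eq_inf' hS g
      rw [hieq]; exact hg i
    have := mse_mono (K : ℝ) σ2 hσ (m : ℝ) (by exact_mod_cast hm1)
      (scalingFactor g S) (g ⟨m - 1, hlt⟩) hSpos hscal_S
    unfold mseOfSet
    rw [hcard, hscal_pref]
    convert this using 2 <;> ring
  -- pick the argmin over prefixes
  obtain ⟨n, hn, hmin⟩ := Finset.exists_min_image (Finset.Icc 1 K)
    (fun n => mseOfSet K σ2 g (pref n)) ⟨1, by simp [hK]⟩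
  rw [Finset.mem_Icc] at hn
  refine ⟨n, hn.1, hn.2, fun S hS => ?_⟩
  have h1 : mseOfSet K σ2 g (pref n) ≤ mseOfSet K σ2 g (pref S.card) := by
    apply hmin
    rw [Finset.mem_Icc]
    exact ⟨Finset.card_pos.2 hS, by simpa using Finset.card_le_univ S⟩
  exact le_trans h1 (hkey S hS)
end
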